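/- Let n ≥ 3, let L be the line (path) on [n] with binomial edge ideal I_L, let g = x_1 y_n − x_n y_1, let J_G̃ be the binomial edge ideal of the complete graph on [n], and let M be the monomial ideal generated by the n−1 monomials x_2 x_3 ⋯ x_i y_{i+1} ⋯ y_{n−1} for i = 1, …, n−1. Then I_L : g = (I_L, M), and consequently (I_L : g) + J_G̃ = M + J_G̃. -/

import Mathlib

open MvPolynomial CategoryTheory Opposite

noncomputable section

namespace BEIPaper

/-- The `x_i` variable of the polynomial ring `K[x_1,…,x_n,y_1,…,y_n]`,
which we realize as `MvPolynomial (σ ⊕ σ) K`, where `Sum.inl i ↦ x_i` and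
`Sum.inr i ↦ y_i`. -/
def xv (K : Type) [Field K] {σ : Type} (i : σ) : MvPolynomial (σ ⊕ σ) K :=
  X (Sum.inl i)

/-- The `y_i` variable. -/
def yv (K : Type) [Field K] {σ : Type} (i : σ) : MvPolynomial (σ ⊕ σ) K :=
  X (Sum.inr i)

/-- The binomial edge ideal of a graph `G` on the vertex set `[n]`:
generated by the binomials `x_i y_j - x_j y_i` for edges `{i, j}` with `i < j`. -/
def bei (K : Type) [Field K] {n : ℕ} (G : SimpleGraph (Fin n)) :
    Ideal (MvPolynomial (Fin n ⊕ Fin n) K) :=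
  Ideal.span {f | ∃ i j : Fin n, i < j ∧ G.Adj i j ∧
    f = xv K i * yv K j - xv K j * yv K i}

/-- The prime ideal `P_T(G)`: generated by `{x_i, y_i : i ∈ T}` together with the
binomial edge ideals of the complete graphs on the vertex sets of the connected
components of the induced subgraph of `G` on `[n] ∖ T` (equivalently, all binomials
`x_i y_j - x_j y_i` where `i < j` lie outside `T` in the same connected component). -/
def PT (K : Type) [Field K] {n : ℕ} (G : SimpleGraph (Fin n)) (T : Set (Fin n)) :
    Ideal (MvPolynomial (Fin n ⊕ Fin n) K) :=
  Ideal.span ((xv K '' T) ∪ (yv K '' T) ∪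
    {f | ∃ i j : Fin n, ∃ (hi : i ∈ Tᶜ) (hj : j ∈ Tᶜ), i < j ∧
      (G.induce Tᶜ).Reachable ⟨i, hi⟩ ⟨j, hj⟩ ∧
      f = xv K i * yv K j - xv K j * yv K i})

/-- `c(T)`: the number of connected components of the induced subgraph of `G`
on `[n] ∖ T`. -/
def ncomp {n : ℕ} (G : SimpleGraph (Fin n)) (T : Set (Fin n)) : ℕ :=
  Nat.card (G.induce Tᶜ).ConnectedComponent

/-- The graded (irrelevant) maximal ideal of a polynomial ring, generated by
all the variables. -/
def mIdeal (K : Type) [Field K] (σ : Type) : Ideal (MvPolynomial σ K) :=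
  Ideal.span (Set.range X)

/-- The depth of a module `M` with respect to an ideal `I`: the supremum of lengths
of `M`-regular sequences consisting of elements of `I`. -/
def depth {R : Type} [CommRing R] (I : Ideal R) (M : Type) [AddCommGroup M]
    [Module R M] : ℕ∞ :=
  sSup {k : ℕ∞ | ∃ rs : List R, (rs.length : ℕ∞) = k ∧ (∀ r ∈ rs, r ∈ I) ∧
    RingTheory.Sequence.IsRegular M rs}

/-- The (Krull) dimension of a module: the Krull dimension of `R` modulo the
annihilator of `M`. -/
def mdim (R : Type) [CommRing R] (M : Type) [AddCommGroup M] [Module R M] :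
    WithBot ℕ∞ :=
  ringKrullDim (R ⧸ Module.annihilator R M)

/-- `M` is a Cohen-Macaulay `R`-module of dimension `d` (depth and dimension both
being taken with respect to the given (maximal graded) ideal `I`). -/
def IsCMmodOfDim {R : Type} [CommRing R] (I : Ideal R) (M : Type) [AddCommGroup M]
    [Module R M] (d : ℕ) : Prop :=
  (depth I M : WithBot ℕ∞) = mdim R M ∧ mdim R M = (d : ℕ∞)

/-- The quotient `S/J` of a polynomial ring `S` by an ideal `J` is a Cohen-Macaulay
ring: its depth with respect to the graded maximal ideal equals its Krull dimension. -/
def IsCMQuot (K : Type) [Field K] {σ : Type} (J : Ideal (MvPolynomial σ K)) : Prop :=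
  (depth (mIdeal K σ) (MvPolynomial σ K ⧸ J) : WithBot ℕ∞) =
    ringKrullDim (MvPolynomial σ K ⧸ J)

/-- `S/I` is approximately Cohen-Macaulay: there is a homogeneous element `x` of
positive degree in the irrelevant ideal of `R = S/I` (i.e. the image of a homogeneous
polynomial `f` of positive degree) such that `R/x^m R = S/(I + (f^m))` is a
Cohen-Macaulay ring of dimension `dim R - 1` for all `m ≥ 1`. -/
def IsACM (K : Type) [Field K] {σ : Type} (I : Ideal (MvPolynomial σ K)) : Prop :=
  ∃ (d : ℕ) (f : MvPolynomial σ K), 0 < d ∧ f.IsHomogeneous d ∧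
    ∀ m : ℕ, 1 ≤ m →
      IsCMQuot K (I ⊔ Ideal.span {f ^ m}) ∧
      ringKrullDim (MvPolynomial σ K ⧸ (I ⊔ Ideal.span {f ^ m})) + 1 =
        ringKrullDim (MvPolynomial σ K ⧸ I)

/-- The Hilbert series of `S/I` (for a homogeneous ideal `I`), as a power series
over `ℤ`: the `m`-th coefficient is the `K`-dimension of the degree-`m` graded
component of `S/I`, i.e. of the image of the space of degree-`m` homogeneous
polynomials in `S/I`. -/
def hseries (K : Type) [Field K] {σ : Type} (I : Ideal (MvPolynomial σ K)) :
    PowerSeries ℤ :=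
  PowerSeries.mk fun m =>
    (Module.finrank K (Submodule.map (Ideal.Quotient.mkₐ K I).toLinearMap
      (homogeneousSubmodule σ K m)) : ℤ)

/-- The formal power series variable `t`. -/
def t : PowerSeries ℤ := PowerSeries.X

/-- The equidimensional part `U_S(I)` of (a minimal primary decomposition of) `I`:
the intersection of the primary components `I(p)` over the associated primes `p`
with `dim S/p = dim S/I`.  Any such `p` is a minimal prime of `I`, so its primary
component is independent of the decomposition and equals the saturation
`{x | ∃ s ∉ p, s * x ∈ I}`. -/
def USideal {R : Type} [CommRing R] (I : Ideal R) : Ideal R :=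
  sInf {J | ∃ p ∈ associatedPrimes R (R ⧸ I),
    ringKrullDim (R ⧸ p) = ringKrullDim (R ⧸ I) ∧
    J = Ideal.span {x | ∃ s ∉ p, s * x ∈ I}}

/-- `Ext_S^j(S/I, S)`, as an object of `ModuleCat S`.  The `i`-th module of
deficiency of `S/I` is `ω^i(S/I) = Ext_S^{2n-i}(S/I, S)`, i.e. `extSI K I (2*n - i)`. -/
def extSI (K : Type) [Field K] {σ : Type} (I : Ideal (MvPolynomial σ K)) (j : ℕ) :
    ModuleCat (MvPolynomial σ K) :=
  ((Ext (MvPolynomial σ K) (ModuleCat (MvPolynomial σ K)) j).obj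
      (op (ModuleCat.of (MvPolynomial σ K) (MvPolynomial σ K ⧸ I)))).obj
    (ModuleCat.of (MvPolynomial σ K) (MvPolynomial σ K))

/-- The line (path) graph on `[n]` (with `[n]` realized as `Fin n`), with edges
`{i, i+1}` for `1 ≤ i ≤ n-1`. -/
def lineG (n : ℕ) : SimpleGraph (Fin n) :=
  SimpleGraph.fromRel (fun a b => (b : ℕ) = (a : ℕ) + 1)

/-- The cycle of length `n` on `[n]` (with `[n]` realized as `Fin n`), with edges
`{i, i+1}` for `1 ≤ i ≤ n-1` together with `{1, n}`. -/
def cycleG (n : ℕ) : SimpleGraph (Fin n) :=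
  SimpleGraph.fromRel (fun a b =>
    (b : ℕ) = (a : ℕ) + 1 ∨ ((a : ℕ) = 0 ∧ (b : ℕ) = n - 1))

/-- The binomial `g = x_1 y_n - x_n y_1`. -/
def gElt (K : Type) [Field K] {n : ℕ} (hn : 0 < n) : MvPolynomial (Fin n ⊕ Fin n) K :=
  xv K ⟨0, hn⟩ * yv K ⟨n - 1, by omega⟩ - xv K ⟨n - 1, by omega⟩ * yv K ⟨0, hn⟩

/-- The `i`-th generator `x_2 x_3 ⋯ x_i y_{i+1} ⋯ y_{n-1}` (for `i = 1, …, n-1`)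
of the monomial ideal `M`; the product ranges over the labels `p = 2, …, n-1`
(`0`-indexed: `q = p - 1` with `1 ≤ q ≤ n-2`), taking `x_p` when `p ≤ i` and
`y_p` when `p > i`. -/
def mgen (K : Type) [Field K] (n : ℕ) (i : ℕ) : MvPolynomial (Fin n ⊕ Fin n) K :=
  ∏ q ∈ Finset.univ.filter (fun q : Fin n => 0 < (q : ℕ) ∧ (q : ℕ) < n - 1),
    (if (q : ℕ) + 1 ≤ i then xv K q else yv K q)

/-- The monomial ideal
`M = (x_2 x_3 ⋯ x_{n-1}, x_2 x_3 ⋯ x_{n-2} y_{n-1}, …, x_2 y_3 ⋯ y_{n-1}, y_2 y_3 ⋯ y_{n-1})`. -/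
def monoM (K : Type) [Field K] (n : ℕ) : Ideal (MvPolynomial (Fin n ⊕ Fin n) K) :=
  Ideal.span {f | ∃ i : ℕ, 1 ≤ i ∧ i ≤ n - 1 ∧ f = mgen K n i}

/-- The degree of a vertex, as the cardinality of its neighbor set. -/
def deg {n : ℕ} (G : SimpleGraph (Fin n)) (v : Fin n) : ℕ :=
  Nat.card (G.neighborSet v)

/-- A tree is 3-star like if no vertex has degree `≥ 4`, and either there is at most
one vertex of degree `3`, or there are exactly two vertices of degree `3` and they
are joined by an edge. -/
def ThreeStarLike {n : ℕ} (G : SimpleGraph (Fin n)) : Prop :=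
  (∀ v, deg G v ≤ 3) ∧
    ({v | deg G v = 3}.Subsingleton ∨
      ∃ a b : Fin n, a ≠ b ∧ G.Adj a b ∧ {v | deg G v = 3} = {a, b})

/-- The graph `G′` on `[n+1]` obtained from a graph `G` on `[n]` by attaching the
new edge `{v, n+1}` at the vertex `v` of `G`. -/
def extendG {n : ℕ} (G : SimpleGraph (Fin n)) (v : Fin n) : SimpleGraph (Fin (n + 1)) :=
  SimpleGraph.fromRel (fun a b =>
    (∃ (ha : a ≠ Fin.last n) (hb : b ≠ Fin.last n),
      G.Adj (a.castPred ha) (b.castPred hb)) ∨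
    (a = Fin.castSucc v ∧ b = Fin.last n))

/-- The inclusion `S = K[x_1,…,x_n,y_1,…,y_n] → S′ = K[x_1,…,x_{n+1},y_1,…,y_{n+1}]`. -/
def liftS (K : Type) [Field K] (n : ℕ) :
    MvPolynomial (Fin n ⊕ Fin n) K →ₐ[K] MvPolynomial (Fin (n + 1) ⊕ Fin (n + 1)) K :=
  rename (Sum.map Fin.castSucc Fin.castSucc)

end BEIPaper

/-!
The binomial edge ideal `I_L` is spanned by the differences `X^a - X^b` of congruent monomials,
for the congruence on exponents generated by the moves `x_i y_{i+1} ↔ x_{i+1} y_i`; hence a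
polynomial lies in `I_L` iff its coefficients sum to zero on every congruence class. A class is
determined by the degree of every column `{x_p, y_p}` and, at every empty column, by the number
of `x`'s to its left: inside a block of nonempty columns an `x` can travel anywhere.

If no interior column of a monomial `m` is empty, then `x_1 y_n m` and `x_n y_1 m` are congruent,
and `m` is a multiple of a squarefree monomial congruent to a generator of `M`. If some interior
column is empty, `f g ∈ I_L` equates the coefficient sum of `f` over a class with the sum over a
"shifted class", in which the `x`-counts left of the interior gaps are larger by one; after enough
shifts the set is empty, so all class sums of `f` vanish and `f ∈ I_L`. The second equality
follows from `I_L ⊆ J_G̃`.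
-/

namespace MvPolynomial

variable {σ R : Type*} [CommRing R]

def binomialIdeal (r : (σ →₀ ℕ) → (σ →₀ ℕ) → Prop) : Ideal (MvPolynomial σ R) :=
  Ideal.span {f | ∃ u v, r u v ∧ f = monomial u 1 - monomial v 1}

def coeffSum (P : Set (σ →₀ ℕ)) : MvPolynomial σ R →ₗ[R] R :=
  Finsupp.linearCombination R (P.indicator 1) ∘ₗ (basisMonomials σ R).repr

open Classical in
theorem coeffSum_monomial (P : Set (σ →₀ ℕ)) (d : σ →₀ ℕ) (c : R) :
    coeffSum P (monomial d c) = if d ∈ P then c else 0 := by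
  have hrepr : (basisMonomials σ R).repr (monomial d c) = Finsupp.single d c := by
    have h1 := (basisMonomials σ R).repr_self d
    rw [coe_basisMonomials] at h1
    rw [← mul_one c, ← smul_eq_mul, ← smul_monomial, map_smul, h1, Finsupp.smul_single]
  simp [coeffSum, hrepr, Set.indicator_apply]

open Classical in
theorem coeffSum_eq_sum_filter (P : Set (σ →₀ ℕ)) (f : MvPolynomial σ R) :
    coeffSum P f = ∑ d ∈ f.support with d ∈ P, f.coeff d := by
  conv_lhs => rw [f.as_sum]
  simp only [map_sum, coeffSum_monomial, Finset.sum_filter]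

theorem coeffSum_mul_monomial (P : Set (σ →₀ ℕ)) (f : MvPolynomial σ R) (w : σ →₀ ℕ) :
    coeffSum P (f * monomial w 1) = coeffSum ((· + w) ⁻¹' P) f := by
  classical
  induction f using MvPolynomial.induction_on' with
  | monomial u a => simp [monomial_mul, coeffSum_monomial]
  | add p q hp hq => simp only [add_mul, map_add, hp, hq]

theorem monomial_sub_monomial_mem_binomialIdeal {r : (σ →₀ ℕ) → (σ →₀ ℕ) → Prop}
    {a b : σ →₀ ℕ} (h : addConGen r a b) (c : R) :
    monomial a c - monomial b c ∈ binomialIdeal r := by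
  induction h with
  | of u v huv =>
    have hgen : monomial u (1 : R) - monomial v 1 ∈ binomialIdeal r :=
      Ideal.subset_span ⟨u, v, huv, rfl⟩
    simpa [mul_sub, C_mul_monomial] using Ideal.mul_mem_left _ (C c) hgen
  | refl => simp
  | symm _ ih => simpa using neg_mem ih
  | trans _ _ ih₁ ih₂ => simpa using add_mem ih₁ ih₂
  | @add w x y z _ _ ih₁ ih₂ =>
    have key : monomial (w + y) c - monomial (x + z) c =
        monomial y 1 * (monomial w c - monomial x c) +
          monomial x 1 * (monomial y c - monomial z c) := by
      simp only [mul_sub, monomial_mul, one_mul]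
      rw [add_comm y w, add_comm x y, add_comm x z]
      ring
    rw [key]
    exact add_mem (Ideal.mul_mem_left _ _ ih₁) (Ideal.mul_mem_left _ _ ih₂)

theorem coeffSum_eq_zero_of_mem_binomialIdeal {r : (σ →₀ ℕ) → (σ →₀ ℕ) → Prop}
    {P : Set (σ →₀ ℕ)} (hP : ∀ a b, addConGen r a b → a ∈ P → b ∈ P)
    {f : MvPolynomial σ R} (hf : f ∈ binomialIdeal r) : coeffSum P f = 0 := by
  classical
  suffices ∀ a : MvPolynomial σ R, coeffSum P (a * f) = 0 by simpa using this 1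
  induction hf using Submodule.span_induction with
  | mem x hx =>
    obtain ⟨u, v, huv, rfl⟩ := hx
    intro a
    induction a using MvPolynomial.induction_on' with
    | monomial e c =>
      have hiff : e + u ∈ P ↔ e + v ∈ P :=
        have h := (addConGen r).add ((addConGen r).refl e) (AddConGen.Rel.of u v huv)
        ⟨hP _ _ h, hP _ _ ((addConGen r).symm h)⟩
      simp [mul_sub, monomial_mul, coeffSum_monomial, hiff]
    | add p q hp hq => simp only [add_mul, map_add, hp, hq, add_zero]
  | zero => simp
  | add x y _ _ hx hy => intro a; simp only [mul_add, map_add, hx, hy, add_zero]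
  | smul b x _ hx => intro a; simpa [← mul_assoc] using hx (a * b)

theorem mem_binomialIdeal_of_coeffSum_eq_zero {r : (σ →₀ ℕ) → (σ →₀ ℕ) → Prop}
    {f : MvPolynomial σ R} (h : ∀ d ∈ f.support, coeffSum {e | addConGen r e d} f = 0) :
    f ∈ binomialIdeal r := by
  classical
  let rep : (σ →₀ ℕ) → (σ →₀ ℕ) := fun d => (Quotient.mk (addConGen r).toSetoid d).out
  have hrep : ∀ d e, rep d = rep e ↔ addConGen r d e := fun d e =>
    Quotient.out_inj.trans Quotient.eq
  have hreps : ∑ d ∈ f.support, monomial (rep d) (f.coeff d) = 0 := by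
    rw [← Finset.sum_fiberwise_of_maps_to (fun d hd => Finset.mem_image_of_mem rep hd)]
    refine Finset.sum_eq_zero fun y hy => ?_
    obtain ⟨d₀, hd₀, rfl⟩ := Finset.mem_image.1 hy
    have hclass : ∑ d ∈ f.support with rep d = rep d₀, f.coeff d = 0 := by
      rw [← h d₀ hd₀, coeffSum_eq_sum_filter]
      simp [hrep]
    rw [Finset.sum_congr rfl fun d hd => by rw [(Finset.mem_filter.1 hd).2], ← map_sum, hclass,
      map_zero]
  have hdiff : f - ∑ d ∈ f.support, monomial (rep d) (f.coeff d) ∈ binomialIdeal r := by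
    rw [show f - _ = ∑ d ∈ f.support, (monomial d (f.coeff d) - monomial (rep d) (f.coeff d))
      by rw [Finset.sum_sub_distrib, ← f.as_sum]]
    exact Ideal.sum_mem _ fun d _ =>
      monomial_sub_monomial_mem_binomialIdeal ((addConGen r).symm (Quotient.mk_out d)) _
  simpa [hreps] using hdiff

theorem mem_of_forall_monomial_mem {I : Ideal (MvPolynomial σ R)} {f : MvPolynomial σ R}
    (h : ∀ d ∈ f.support, monomial d 1 ∈ I) : f ∈ I := by
  rw [f.as_sum]
  refine Ideal.sum_mem _ fun d hd => ?_
  simpa [C_mul_monomial] using I.mul_mem_left (C (f.coeff d)) (h d hd)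

theorem exists_split_support (P : (σ →₀ ℕ) → Prop) (f : MvPolynomial σ R) :
    ∃ f₁ f₂, f = f₁ + f₂ ∧ (∀ d ∈ f₁.support, P d) ∧ ∀ d ∈ f₂.support, ¬P d := by
  classical
  have hsupp (Q : (σ →₀ ℕ) → Prop) [DecidablePred Q] :
      ∀ d ∈ (∑ e ∈ f.support with Q e, monomial e (f.coeff e)).support, Q d := by
    intro d hd
    obtain ⟨e, he, hde⟩ := Finset.mem_biUnion.1 (support_sum hd)
    rw [Finset.mem_singleton.1 (support_monomial_subset hde)]
    exact (Finset.mem_filter.1 he).2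
  exact ⟨_, _, f.as_sum.trans (Finset.sum_filter_add_sum_filter_not _ P _).symm,
    hsupp P, hsupp (¬P ·)⟩

end MvPolynomial

namespace BEIPaper

section BinomialEdgeIdeal

variable {σ : Type} {n : ℕ}

abbrev xe (i : σ) : σ ⊕ σ →₀ ℕ := Finsupp.single (Sum.inl i) 1

abbrev ye (i : σ) : σ ⊕ σ →₀ ℕ := Finsupp.single (Sum.inr i) 1

theorem xv_mul_yv (K : Type) [Field K] (i j : σ) :
    xv K i * yv K j = monomial (xe i + ye j) 1 := by
  rw [xv, yv, X, X, monomial_mul, one_mul]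

def edgeMove (G : SimpleGraph (Fin n)) (u v : Fin n ⊕ Fin n →₀ ℕ) : Prop :=
  ∃ i j, i < j ∧ G.Adj i j ∧ u = xe i + ye j ∧ v = xe j + ye i

theorem bei_eq_binomialIdeal (K : Type) [Field K] (G : SimpleGraph (Fin n)) :
    bei K G = binomialIdeal (edgeMove G) := by
  unfold bei binomialIdeal
  congr 1
  ext f
  simp only [Set.mem_ofPred_eq, edgeMove, xv_mul_yv]
  constructor
  · rintro ⟨i, j, hij, hG, rfl⟩
    exact ⟨_, _, ⟨i, j, hij, hG, rfl, rfl⟩, rfl⟩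
  · rintro ⟨_, _, ⟨i, j, hij, hG, rfl, rfl⟩, rfl⟩
    exact ⟨i, j, hij, hG, rfl⟩

theorem bei_mono (K : Type) [Field K] {G H : SimpleGraph (Fin n)} (h : G ≤ H) :
    bei K G ≤ bei K H :=
  Ideal.span_mono fun _ ⟨i, j, hij, hG, hf⟩ => ⟨i, j, hij, h hG, hf⟩

theorem lineG_adj_of_lt {i j : Fin n} (hij : i < j) : (lineG n).Adj i j ↔ (j : ℕ) = i + 1 := by
  rw [Fin.lt_def] at hij
  simp only [lineG, SimpleGraph.fromRel_adj, ne_eq]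
  constructor
  · rintro ⟨-, h | h⟩ <;> omega
  · intro h
    exact ⟨by rintro rfl; omega, Or.inl h⟩

end BinomialEdgeIdeal

section LineInvariants

variable {n : ℕ}

def colDeg (d : Fin n ⊕ Fin n →₀ ℕ) (q : Fin n) : ℕ := d (Sum.inl q) + d (Sum.inr q)

def xBelow (d : Fin n ⊕ Fin n →₀ ℕ) (p : ℕ) : ℕ := ∑ t : Fin n with t.val < p, d (Sum.inl t)

def IsGap (d : Fin n ⊕ Fin n →₀ ℕ) (p : ℕ) : Prop := ∀ q : Fin n, (q : ℕ) = p → colDeg d q = 0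

@[simp] theorem colDeg_add (a b : Fin n ⊕ Fin n →₀ ℕ) (q : Fin n) :
    colDeg (a + b) q = colDeg a q + colDeg b q := by
  simp only [colDeg, Finsupp.add_apply]; ring

@[simp] theorem colDeg_xe (i q : Fin n) : colDeg (xe i) q = if i = q then 1 else 0 := by
  simp [colDeg, Finsupp.single_apply]

@[simp] theorem colDeg_ye (i q : Fin n) : colDeg (ye i) q = if i = q then 1 else 0 := by
  simp [colDeg, Finsupp.single_apply]

@[simp] theorem xBelow_add (a b : Fin n ⊕ Fin n →₀ ℕ) (p : ℕ) :
    xBelow (a + b) p = xBelow a p + xBelow b p := by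
  simp only [xBelow, Finsupp.add_apply, Finset.sum_add_distrib]

@[simp] theorem xBelow_xe (i : Fin n) (p : ℕ) : xBelow (xe i) p = if (i : ℕ) < p then 1 else 0 := by
  simp [xBelow, Finsupp.single_apply]

@[simp] theorem xBelow_ye (i : Fin n) (p : ℕ) : xBelow (ye i) p = 0 := by
  simp [xBelow]

theorem isGap_add {a b : Fin n ⊕ Fin n →₀ ℕ} {p : ℕ} :
    IsGap (a + b) p ↔ IsGap a p ∧ IsGap b p := by
  simp only [IsGap, colDeg_add, Nat.add_eq_zero_iff]
  exact ⟨fun h => ⟨fun q hq => (h q hq).1, fun q hq => (h q hq).2⟩,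
    fun h q hq => ⟨h.1 q hq, h.2 q hq⟩⟩

theorem isGap_congr {a b : Fin n ⊕ Fin n →₀ ℕ} (h : ∀ q, colDeg a q = colDeg b q) {p : ℕ} :
    IsGap a p ↔ IsGap b p := by
  simp only [IsGap, h]

/-- Every `p ≥ n` counts as a gap, so the total `x`-degree `xBelow d n` is one of the
invariants. -/
def lineInvCon (n : ℕ) : AddCon (Fin n ⊕ Fin n →₀ ℕ) where
  r a b := (∀ q, colDeg a q = colDeg b q) ∧ ∀ p, IsGap a p → xBelow a p = xBelow b p
  iseqv :=
    { refl := fun _ => ⟨fun _ => rfl, fun _ _ => rfl⟩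
      symm := fun ⟨hc, hx⟩ =>
        ⟨fun q => (hc q).symm, fun p hp => (hx p ((isGap_congr hc).2 hp)).symm⟩
      trans := fun ⟨hc, hx⟩ ⟨hc', hx'⟩ =>
        ⟨fun q => (hc q).trans (hc' q),
          fun p hp => (hx p hp).trans (hx' p ((isGap_congr hc).1 hp))⟩ }
  add' := fun ⟨hc, hx⟩ ⟨hc', hx'⟩ =>
    ⟨fun q => by simp [hc q, hc' q], fun p hp => by
      rw [isGap_add] at hp
      simp [hx p hp.1, hx' p hp.2]⟩

theorem addConGen_le_lineInvCon : addConGen (edgeMove (lineG n)) ≤ lineInvCon n := by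
  refine AddCon.addConGen_le.2 ?_
  rintro _ _ ⟨i, j, hij, hadj, rfl, rfl⟩
  have hj : (j : ℕ) = i + 1 := (lineG_adj_of_lt hij).1 hadj
  refine ⟨fun q => by simp only [colDeg_add, colDeg_xe, colDeg_ye]; omega, fun p hp => ?_⟩
  obtain ⟨-, hpj⟩ := isGap_add.1 hp
  have : (j : ℕ) ≠ p := fun h => by simpa using hpj j h
  simp only [xBelow_add, xBelow_xe, xBelow_ye]
  split_ifs <;> omega

end LineInvariants

section LineCongruence

variable {n : ℕ}

theorem exists_eq_add_single {ι : Type*} {s : ι} {d : ι →₀ ℕ} (h : 0 < d s) :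
    ∃ e, d = e + Finsupp.single s 1 :=
  ⟨d - Finsupp.single s 1, (tsub_add_cancel_of_le (Finsupp.single_le_iff.2 h)).symm⟩

theorem addConGen_lineG_swap_of_adjacent {a b : Fin n} (hab : (b : ℕ) = a + 1)
    (d : Fin n ⊕ Fin n →₀ ℕ) :
    addConGen (edgeMove (lineG n)) (d + xe a + ye b) (d + xe b + ye a) := by
  have hlt : a < b := by rw [Fin.lt_def]; omega
  have hmove := AddConGen.Rel.of (r := edgeMove (lineG n)) _ _
    ⟨a, b, hlt, (lineG_adj_of_lt hlt).2 hab, rfl, rfl⟩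
  simpa only [add_assoc] using (addConGen (edgeMove (lineG n))).add ((addConGen _).refl d) hmove

theorem addConGen_lineG_swap {a b : Fin n} (hab : a < b) {d : Fin n ⊕ Fin n →₀ ℕ}
    (hd : ∀ t, a < t → t < b → 0 < colDeg d t) :
    addConGen (edgeMove (lineG n)) (d + xe a + ye b) (d + xe b + ye a) := by
  obtain ⟨k, hk⟩ : ∃ k, (b : ℕ) = a + k + 1 := ⟨b - a - 1, by rw [Fin.lt_def] at hab; omega⟩
  induction k generalizing a d with
  | zero => exact addConGen_lineG_swap_of_adjacent hk d
  | succ k ih =>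
    set c := addConGen (edgeMove (lineG n))
    let m : Fin n := ⟨a + 1, by omega⟩
    have ham : a < m := Fin.lt_def.2 (show (a : ℕ) < a + 1 by omega)
    have hmb : m < b := Fin.lt_def.2 (show (a : ℕ) + 1 < b by omega)
    have hkm : (b : ℕ) = m + k + 1 := by simp only [m]; omega
    rcases Nat.eq_zero_or_pos (d (Sum.inl m)) with hx | hx
    · obtain ⟨e, rfl⟩ := exists_eq_add_single (d := d) (s := Sum.inr m)
        (by have := hd m ham hmb; unfold colDeg at this; omega)
      have h₁ := addConGen_lineG_swap_of_adjacent (d := e + ye b) (a := a) (b := m) rfl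
      have h₂ := ih hmb (d := e + ye a) (fun t hmt htb => by
        simpa [if_neg hmt.ne, if_neg (ham.trans hmt).ne] using hd t (ham.trans hmt) htb) hkm
      have := c.trans h₁ (by convert h₂ using 1; abel)
      convert this using 1 <;> abel
    · obtain ⟨e, rfl⟩ := exists_eq_add_single hx
      have h₁ := ih hmb (d := e + xe a) (fun t hmt htb => by
        simpa [if_neg hmt.ne, if_neg (ham.trans hmt).ne] using hd t (ham.trans hmt) htb) hkm
      have h₂ := addConGen_lineG_swap_of_adjacent (d := e + xe b) (a := a) (b := m) rfl
      have := c.trans h₁ (by convert h₂ using 1; abel)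
      convert this using 1 <;> abel

theorem xBelow_eq_zero {d : Fin n ⊕ Fin n →₀ ℕ} {p : ℕ}
    (h : ∀ t : Fin n, (t : ℕ) < p → colDeg d t = 0) : xBelow d p = 0 :=
  Finset.sum_eq_zero fun t ht => by
    have := h t (Finset.mem_filter.1 ht).2
    unfold colDeg at this
    omega

theorem eq_zero_of_colDeg_eq_zero {d : Fin n ⊕ Fin n →₀ ℕ} (h : ∀ q, colDeg d q = 0) : d = 0 := by
  ext (q | q) <;> have := h q <;> unfold colDeg at this <;>
    simp only [Finsupp.coe_zero, Pi.zero_apply] <;> omega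

theorem lineInvCon_of_add {e₁ e₂ u : Fin n ⊕ Fin n →₀ ℕ} {q : Fin n}
    (hu : ∀ t, colDeg u t = if q = t then 1 else 0) (hbelow : ∀ t < q, colDeg e₁ t = 0)
    (h : lineInvCon n (e₁ + u) (e₂ + u)) : lineInvCon n e₁ e₂ := by
  obtain ⟨hc, hx⟩ := h
  have hc' : ∀ t, colDeg e₁ t = colDeg e₂ t := fun t => by simpa using hc t
  refine ⟨hc', fun p hp => ?_⟩
  by_cases hpq : (q : ℕ) = p
  · subst hpq
    rw [xBelow_eq_zero fun t ht => hbelow t ht,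
      xBelow_eq_zero fun t ht => (hc' t).symm.trans (hbelow t ht)]
  · have hgap : IsGap (e₁ + u) p :=
      isGap_add.2 ⟨hp, fun t ht => by rw [hu, if_neg (by rintro rfl; exact hpq ht)]⟩
    simpa using hx p hgap

theorem exists_first_column {d : Fin n ⊕ Fin n →₀ ℕ} (h : 0 < ∑ q, colDeg d q) :
    ∃ q, 0 < colDeg d q ∧ ∀ t < q, colDeg d t = 0 := by
  classical
  obtain ⟨q₀, -, hq₀⟩ := Finset.sum_pos_iff.1 h
  have hne : (Finset.univ.filter fun q => 0 < colDeg d q).Nonempty := ⟨q₀, by simpa using hq₀⟩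
  exact ⟨_, (Finset.mem_filter.1 (Finset.min'_mem _ hne)).2, fun t htq =>
    Nat.eq_zero_of_not_pos fun ht => not_le.2 htq (Finset.min'_le _ _ (by simpa using ht))⟩

theorem exists_isGap_block (d : Fin n ⊕ Fin n →₀ ℕ) (q : Fin n) :
    ∃ r, (q : ℕ) < r ∧ IsGap d r ∧ ∀ t, q < t → (t : ℕ) < r → 0 < colDeg d t := by
  classical
  have hgap : ∃ r, (q : ℕ) < r ∧ IsGap d r := ⟨n, q.isLt, fun t ht => absurd ht t.isLt.ne⟩
  exact ⟨Nat.find hgap, (Nat.find_spec hgap).1, (Nat.find_spec hgap).2, fun t hqt htr =>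
    Nat.pos_of_ne_zero fun h0 => Nat.find_min hgap htr ⟨hqt, fun t' ht' => Fin.ext ht' ▸ h0⟩⟩

theorem exists_addConGen_add_first_column {d : Fin n ⊕ Fin n →₀ ℕ} {q : Fin n} {r : ℕ}
    (hq : 0 < colDeg d q) (hbelow : ∀ t < q, colDeg d t = 0) (hqr : (q : ℕ) < r)
    (hblock : ∀ t, q < t → (t : ℕ) < r → 0 < colDeg d t) :
    ∃ e, addConGen (edgeMove (lineG n)) d (e + if 0 < xBelow d r then xe q else ye q) := by
  set c := addConGen (edgeMove (lineG n))
  unfold colDeg at hq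
  split_ifs with hx
  · obtain ⟨j, hjr, hj⟩ := Finset.sum_pos_iff.1 hx
    have hjr : (j : ℕ) < r := (Finset.mem_filter.1 hjr).2
    have hqj : q ≤ j := not_lt.1 fun hjq => by
      have := hbelow j hjq
      unfold colDeg at this
      omega
    rcases Nat.eq_zero_or_pos (d (Sum.inl q)) with hxq | hxq
    · have hqj : q < j := lt_of_le_of_ne hqj (by rintro rfl; omega)
      have hyq : 0 < d (Sum.inr q) := by omega
      obtain ⟨e', rfl⟩ := exists_eq_add_single hj
      obtain ⟨e, rfl⟩ := exists_eq_add_single (d := e') (s := Sum.inr q) (by simpa using hyq)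
      have hmove := addConGen_lineG_swap hqj (d := e) fun t hqt htj => by
        have := hblock t hqt (lt_trans (Fin.lt_def.1 htj) hjr)
        simpa [colDeg_add, if_neg hqt.ne, if_neg htj.ne'] using this
      exact ⟨e + ye j, by convert c.symm hmove using 1 <;> abel⟩
    · obtain ⟨e, rfl⟩ := exists_eq_add_single hxq
      exact ⟨e, c.refl _⟩
  · have hxq : d (Sum.inl q) = 0 :=
      Finset.sum_eq_zero_iff.1 (Nat.eq_zero_of_not_pos hx) q (by simpa using hqr)
    obtain ⟨e, rfl⟩ := exists_eq_add_single (d := d) (s := Sum.inr q) (by omega)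
    exact ⟨e, c.refl _⟩

theorem lineInvCon_le_addConGen : lineInvCon n ≤ addConGen (edgeMove (lineG n)) := by
  set c := addConGen (edgeMove (lineG n))
  intro d₁ d₂ h
  obtain ⟨N, hN⟩ : ∃ N, ∑ q, colDeg d₁ q = N := ⟨_, rfl⟩
  induction N generalizing d₁ d₂ with
  | zero =>
    have h₁ : ∀ q, colDeg d₁ q = 0 := fun q => Finset.sum_eq_zero_iff.1 hN q (Finset.mem_univ _)
    rw [eq_zero_of_colDeg_eq_zero h₁,
      eq_zero_of_colDeg_eq_zero fun q => (h.1 q).symm.trans (h₁ q)]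
    exact c.refl 0
  | succ N ih =>
    obtain ⟨q, hq, hbelow⟩ := exists_first_column (d := d₁) (by omega)
    obtain ⟨r, hqr, hrgap, hblock⟩ := exists_isGap_block d₁ q
    obtain ⟨e₁, h₁⟩ := exists_addConGen_add_first_column hq hbelow hqr hblock
    obtain ⟨e₂, h₂⟩ := exists_addConGen_add_first_column (d := d₂) (h.1 q ▸ hq)
      (fun t ht => (h.1 t).symm.trans (hbelow t ht)) hqr
      (fun t hqt htr => h.1 t ▸ hblock t hqt htr)
    rw [← h.2 _ hrgap] at h₂
    set u := if 0 < xBelow d₁ r then xe q else ye q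
    have hu : ∀ t, colDeg u t = if q = t then 1 else 0 := fun t => by
      simp only [u]; split <;> simp only [colDeg_xe, colDeg_ye]
    have hinv : lineInvCon n (e₁ + u) (e₂ + u) :=
      (lineInvCon n).trans ((lineInvCon n).symm (addConGen_le_lineInvCon h₁))
        ((lineInvCon n).trans h (addConGen_le_lineInvCon h₂))
    have hcol₁ : ∀ t, colDeg d₁ t = colDeg e₁ t + if q = t then 1 else 0 := fun t => by
      rw [(addConGen_le_lineInvCon h₁).1 t, colDeg_add, hu]
    have hbelow₁ : ∀ t < q, colDeg e₁ t = 0 := fun t ht => by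
      have := hcol₁ t
      rw [hbelow t ht] at this
      omega
    have hsum : ∑ t, colDeg e₁ t = N := by
      simp only [hcol₁, Finset.sum_add_distrib, Finset.sum_ite_eq, Finset.mem_univ,
        if_true] at hN
      omega
    exact c.trans h₁ (c.trans (c.add (ih (lineInvCon_of_add hu hbelow₁ hinv) hsum) (c.refl u))
      (c.symm h₂))

theorem addConGen_edgeMove_lineG : addConGen (edgeMove (lineG n)) = lineInvCon n :=
  le_antisymm addConGen_le_lineInvCon lineInvCon_le_addConGen

end LineCongruence

section InteriorGaps

variable {n : ℕ}

theorem isGap_coe_iff {d : Fin n ⊕ Fin n →₀ ℕ} {t : Fin n} : IsGap d t ↔ colDeg d t = 0 :=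
  ⟨fun h => h t rfl, fun h _ ht => Fin.ext ht ▸ h⟩

@[simp] theorem isGap_xe {i : Fin n} {p : ℕ} : IsGap (xe i) p ↔ (i : ℕ) ≠ p := by
  simp only [IsGap, colDeg_xe, ite_eq_right_iff, one_ne_zero, imp_false]
  exact ⟨fun h hi => h i hi rfl, fun h q hq hiq => h (hiq ▸ hq)⟩

@[simp] theorem isGap_ye {i : Fin n} {p : ℕ} : IsGap (ye i) p ↔ (i : ℕ) ≠ p := by
  simp only [IsGap, colDeg_ye, ite_eq_right_iff, one_ne_zero, imp_false]
  exact ⟨fun h hi => h i hi rfl, fun h q hq hiq => h (hiq ▸ hq)⟩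

theorem xBelow_add_one_of_isGap {d : Fin n ⊕ Fin n →₀ ℕ} {p : ℕ} (h : IsGap d p) :
    xBelow d (p + 1) = xBelow d p := by
  simp only [xBelow, Finset.sum_filter]
  refine Finset.sum_congr rfl fun t _ => ?_
  by_cases htp : (t : ℕ) = p
  · have := h t htp
    unfold colDeg at this
    simp [htp, show d (Sum.inl t) = 0 by omega]
  · simp only [show (t : ℕ) < p + 1 ↔ (t : ℕ) < p by omega]

theorem xBelow_mono (d : Fin n ⊕ Fin n →₀ ℕ) {p p' : ℕ} (h : p ≤ p') :
    xBelow d p ≤ xBelow d p' :=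
  Finset.sum_le_sum_of_subset
    (Finset.monotone_filter_right _ fun t _ (ht : (t : ℕ) < p) => lt_of_lt_of_le ht h)

def HasInteriorGap (d : Fin n ⊕ Fin n →₀ ℕ) : Prop := ∃ p, 0 < p ∧ p < n - 1 ∧ IsGap d p

/-- The condition at `n - 1` is left out: it follows from the one at `n`, and `n - 1` is never a
gap of `d₀ + x₁yₙ`. -/
def shiftedClass (d₀ : Fin n ⊕ Fin n →₀ ℕ) (k : ℕ) : Set (Fin n ⊕ Fin n →₀ ℕ) :=
  {d | (∀ q, colDeg d q = colDeg d₀ q) ∧ ∀ p, 0 < p → p ≠ n - 1 → IsGap d₀ p →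
    xBelow d p = xBelow d₀ p + if p < n - 1 then k else 0}

theorem shiftedClass_zero (d₀ : Fin n ⊕ Fin n →₀ ℕ) :
    shiftedClass d₀ 0 = {d | lineInvCon n d d₀} := by
  ext d
  simp only [shiftedClass, ite_self, add_zero, Set.mem_ofPred_eq]
  constructor
  · rintro ⟨hc, hx⟩
    refine ⟨hc, fun p hp => ?_⟩
    have hp₀ := (isGap_congr hc).1 hp
    rcases Nat.eq_zero_or_pos p with rfl | hpos
    · rw [xBelow_eq_zero (by omega), xBelow_eq_zero (by omega)]
    by_cases hpn : p = n - 1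
    · subst hpn
      have hd := xBelow_add_one_of_isGap hp
      have hd₀ := xBelow_add_one_of_isGap hp₀
      rw [Nat.sub_add_cancel (by omega)] at hd hd₀
      rw [← hd, ← hd₀]
      exact hx n (by omega) (by omega) fun t ht => absurd ht t.isLt.ne
    · exact hx p hpos hpn hp₀
  · rintro ⟨hc, hx⟩
    exact ⟨hc, fun p _ _ hp => hx p ((isGap_congr hc).2 hp)⟩

theorem mem_shiftedClass_of_lineInvCon {d₀ a b : Fin n ⊕ Fin n →₀ ℕ} {k : ℕ}
    (h : lineInvCon n a b) (ha : a ∈ shiftedClass d₀ k) : b ∈ shiftedClass d₀ k :=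
  ⟨fun q => (h.1 q).symm.trans (ha.1 q), fun p hp hpn hgap =>
    (h.2 p ((isGap_congr ha.1).2 hgap)).symm.trans (ha.2 p hp hpn hgap)⟩

theorem shiftedClass_eq_empty {d₀ : Fin n ⊕ Fin n →₀ ℕ} (hgap : HasInteriorGap d₀) {k : ℕ}
    (hk : xBelow d₀ n < k) : shiftedClass d₀ k = ∅ := by
  obtain ⟨p, hp, hpn, hgap⟩ := hgap
  refine Set.eq_empty_of_forall_notMem fun d ⟨_, hx⟩ => ?_
  have hxp := hx p hp (by omega) hgap
  have hxn := hx n (by omega) (by omega) fun t ht => absurd ht t.isLt.ne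
  rw [if_pos hpn] at hxp
  rw [if_neg (by omega)] at hxn
  have := xBelow_mono d (show p ≤ n by omega)
  omega

section Endpoints

variable {z l : Fin n} (hz : (z : ℕ) = 0) (hl : (l : ℕ) = n - 1)
include hz hl

theorem preimage_shiftedClass_add_left (d₀ : Fin n ⊕ Fin n →₀ ℕ) (k : ℕ) :
    (· + (xe z + ye l)) ⁻¹' shiftedClass (d₀ + (xe z + ye l)) k = shiftedClass d₀ k := by
  ext d
  simp only [shiftedClass, Set.mem_preimage, Set.mem_ofPred_eq, colDeg_add, add_left_inj,
    xBelow_add, xBelow_xe, xBelow_ye, isGap_add, isGap_xe, isGap_ye, hz, hl]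
  refine and_congr Iff.rfl ⟨fun hx p hp hpn hgap => ?_, fun hx p hp hpn hgap => ?_⟩
  · have := hx p hp hpn ⟨hgap, by omega, by omega⟩
    split_ifs at this ⊢ <;> omega
  · have := hx p hp hpn hgap.1
    split_ifs at this ⊢ <;> omega

theorem preimage_shiftedClass_add_right (d₀ : Fin n ⊕ Fin n →₀ ℕ) (k : ℕ) :
    (· + (xe l + ye z)) ⁻¹' shiftedClass (d₀ + (xe z + ye l)) k = shiftedClass d₀ (k + 1) := by
  ext d
  have hswap : ∀ q, colDeg (xe l) q + colDeg (ye z) q = colDeg (xe z) q + colDeg (ye l) q :=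
    fun q => by simp only [colDeg_xe, colDeg_ye]; omega
  simp only [shiftedClass, Set.mem_preimage, Set.mem_ofPred_eq, colDeg_add, hswap, add_left_inj,
    xBelow_add, xBelow_xe, xBelow_ye, isGap_add, isGap_xe, isGap_ye, hz, hl]
  refine and_congr Iff.rfl ⟨fun hx p hp hpn hgap => ?_, fun hx p hp hpn hgap => ?_⟩
  · have := hx p hp hpn ⟨hgap, by omega, by omega⟩
    split_ifs at this ⊢ <;> omega
  · have := hx p hp hpn hgap.1
    split_ifs at this ⊢ <;> omega

end Endpoints

theorem gElt_eq (K : Type) [Field K] (hn : 0 < n) :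
    gElt K hn = monomial (xe ⟨0, hn⟩ + ye ⟨n - 1, by omega⟩) 1 -
      monomial (xe ⟨n - 1, by omega⟩ + ye ⟨0, hn⟩) 1 := by
  rw [gElt, xv_mul_yv, xv_mul_yv]

theorem mem_bei_lineG_of_mul_gElt_mem (K : Type) [Field K] (hn : 0 < n)
    {f : MvPolynomial (Fin n ⊕ Fin n) K} (hfg : f * gElt K hn ∈ bei K (lineG n))
    (hf : ∀ d ∈ f.support, HasInteriorGap d) : f ∈ bei K (lineG n) := by
  rw [bei_eq_binomialIdeal] at hfg ⊢
  refine mem_binomialIdeal_of_coeffSum_eq_zero fun d₀ hd₀ => ?_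
  have hstep (k : ℕ) : coeffSum (shiftedClass d₀ k) f = coeffSum (shiftedClass d₀ (k + 1)) f := by
    have := coeffSum_eq_zero_of_mem_binomialIdeal
      (P := shiftedClass (d₀ + (xe ⟨0, hn⟩ + ye ⟨n - 1, by omega⟩)) k)
      (fun _ _ h => mem_shiftedClass_of_lineInvCon (addConGen_le_lineInvCon h)) hfg
    rwa [gElt_eq, mul_sub, map_sub, coeffSum_mul_monomial, coeffSum_mul_monomial,
      preimage_shiftedClass_add_left rfl rfl, preimage_shiftedClass_add_right rfl rfl,
      sub_eq_zero] at this
  have hconst (k : ℕ) : coeffSum (shiftedClass d₀ 0) f = coeffSum (shiftedClass d₀ k) f := by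
    induction k with
    | zero => rfl
    | succ k ih => exact ih.trans (hstep k)
  rw [addConGen_edgeMove_lineG, ← shiftedClass_zero, hconst (xBelow d₀ n + 1),
    shiftedClass_eq_empty (hf d₀ hd₀) (Nat.lt_succ_self _)]
  simp [coeffSum_eq_sum_filter]

end InteriorGaps

section CompleteMonomials

variable {n : ℕ}

def interior (n : ℕ) : Finset (Fin n) :=
  Finset.univ.filter fun q : Fin n => 0 < (q : ℕ) ∧ (q : ℕ) < n - 1

def pattern (c : Fin n → Prop) [DecidablePred c] : Fin n ⊕ Fin n →₀ ℕ :=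
  ∑ q ∈ interior n, Finsupp.single (if c q then Sum.inl q else Sum.inr q) 1

variable (c : Fin n → Prop) [DecidablePred c]

theorem pattern_apply_inl (t : Fin n) :
    pattern c (Sum.inl t) = if t ∈ interior n ∧ c t then 1 else 0 := by
  have hterm (q : Fin n) : Finsupp.single (if c q then Sum.inl q else Sum.inr q) 1 (Sum.inl t) =
      if t = q then (if c q then 1 else 0) else 0 := by
    rw [Finsupp.single_apply]
    split_ifs <;> simp_all
  rw [pattern, Finsupp.finsetSum_apply, Finset.sum_congr rfl fun q _ => hterm q,
    Finset.sum_ite_eq, ite_and]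

theorem pattern_apply_inr (t : Fin n) :
    pattern c (Sum.inr t) = if t ∈ interior n ∧ ¬c t then 1 else 0 := by
  have hterm (q : Fin n) : Finsupp.single (if c q then Sum.inl q else Sum.inr q) 1 (Sum.inr t) =
      if t = q then (if ¬c q then 1 else 0) else 0 := by
    rw [Finsupp.single_apply]
    split_ifs <;> simp_all
  rw [pattern, Finsupp.finsetSum_apply, Finset.sum_congr rfl fun q _ => hterm q,
    Finset.sum_ite_eq, ite_and]

theorem colDeg_pattern (t : Fin n) : colDeg (pattern c) t = if t ∈ interior n then 1 else 0 := by
  by_cases hc : c t <;> by_cases ht : t ∈ interior n <;>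
    simp [colDeg, pattern_apply_inl, pattern_apply_inr, hc, ht]

theorem xBelow_pattern {p : ℕ} (hp : n - 1 ≤ p) :
    xBelow (pattern c) p = ((interior n).filter c).card := by
  rw [xBelow, Finset.sum_congr rfl fun t _ => pattern_apply_inl c t, Finset.sum_boole,
    Nat.cast_id, Finset.filter_filter]
  congr 1
  ext t
  simp only [interior, Finset.mem_filter, Finset.mem_univ, true_and]
  exact ⟨fun h => h.2, fun h => ⟨by omega, h⟩⟩

theorem mgen_eq_monomial_pattern (K : Type) [Field K] (i : ℕ) :
    mgen K n i = monomial (pattern fun q : Fin n => (q : ℕ) + 1 ≤ i) 1 := by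
  rw [mgen, pattern, monomial_sum_one]
  exact Finset.prod_congr rfl fun q _ => by split <;> rfl

theorem card_interior_filter_le {t : ℕ} (ht : t ≤ n - 2) :
    ((interior n).filter fun q : Fin n => (q : ℕ) + 1 ≤ t + 1).card = t := by
  rw [← Finset.card_image_of_injective _ Fin.val_injective]
  refine Eq.trans (congrArg Finset.card ?_) (Nat.card_Icc 1 t)
  ext m
  simp only [interior, Finset.mem_image, Finset.mem_filter, Finset.mem_univ, true_and,
    Finset.mem_Icc]
  constructor
  · rintro ⟨q, ⟨⟨h₁, h₂⟩, h₃⟩, rfl⟩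
    omega
  · intro hm
    exact ⟨⟨m, by omega⟩, ⟨⟨show 0 < m by omega, show m < n - 1 by omega⟩,
      show m + 1 ≤ t + 1 by omega⟩, rfl⟩

theorem not_hasInteriorGap_pattern : ¬HasInteriorGap (pattern c) := by
  rintro ⟨p, hp, hpn, hgap⟩
  have := hgap ⟨p, by omega⟩ rfl
  have hint : (⟨p, by omega⟩ : Fin n) ∈ interior n := by
    simp only [interior, Finset.mem_filter, Finset.mem_univ, true_and]
    omega
  rw [colDeg_pattern, if_pos hint] at this
  exact one_ne_zero this

theorem monomial_mul_gElt_mem_bei (K : Type) [Field K] (hn : 2 ≤ n) {d : Fin n ⊕ Fin n →₀ ℕ}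
    (hd : ¬HasInteriorGap d) : monomial d 1 * gElt K (by omega) ∈ bei K (lineG n) := by
  have hzl : (⟨0, by omega⟩ : Fin n) < ⟨n - 1, by omega⟩ := Fin.lt_def.2 (show 0 < n - 1 by omega)
  rw [gElt_eq, mul_sub, monomial_mul, monomial_mul, bei_eq_binomialIdeal, ← add_assoc,
    ← add_assoc]
  refine monomial_sub_monomial_mem_binomialIdeal (addConGen_lineG_swap hzl fun t h₁ h₂ => ?_) _
  rw [Fin.lt_def] at h₁ h₂
  exact Nat.pos_of_ne_zero fun h0 => hd ⟨t, h₁, h₂, isGap_coe_iff.2 h0⟩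

theorem monomial_mem_bei_sup_monoM (K : Type) [Field K] (hn : 2 ≤ n) {d : Fin n ⊕ Fin n →₀ ℕ}
    (hd : ¬HasInteriorGap d) : monomial d 1 ∈ bei K (lineG n) ⊔ monoM K n := by
  have hcol (q : Fin n) (hq : q ∈ interior n) : 0 < colDeg d q := by
    simp only [interior, Finset.mem_filter, Finset.mem_univ, true_and] at hq
    exact Nat.pos_of_ne_zero fun h0 => hd ⟨q, hq.1, hq.2, isGap_coe_iff.2 h0⟩
  set e := pattern fun q => 0 < d (Sum.inl q)
  have hle : e ≤ d := by
    rintro (t | t)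
    · rw [pattern_apply_inl]
      split_ifs with h
      exacts [h.2, Nat.zero_le _]
    · rw [pattern_apply_inr]
      split_ifs with h
      · have := hcol t h.1
        unfold colDeg at this
        omega
      · exact Nat.zero_le _
  set t := ((interior n).filter fun q => 0 < d (Sum.inl q)).card
  have ht : t ≤ n - 2 := by
    refine (Finset.card_filter_le _ _).trans (le_of_eq ?_)
    rw [← card_interior_filter_le (le_refl (n - 2)), Finset.filter_true_of_mem]
    intro q hq
    simp only [interior, Finset.mem_filter] at hq
    omega
  set e' := pattern fun q : Fin n => (q : ℕ) + 1 ≤ t + 1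
  have hee' : lineInvCon n e e' := by
    refine ⟨fun q => by rw [colDeg_pattern, colDeg_pattern], fun p hp => ?_⟩
    rcases Nat.eq_zero_or_pos p with rfl | hp₀
    · rw [xBelow_eq_zero (by omega), xBelow_eq_zero (by omega)]
    have hpn : n - 1 ≤ p := not_lt.1 fun hpn => not_hasInteriorGap_pattern _ ⟨p, hp₀, hpn, hp⟩
    rw [xBelow_pattern _ hpn, xBelow_pattern _ hpn, card_interior_filter_le ht]
  have hdecomp : monomial d (1 : K) =
      monomial (d - e) 1 * (monomial e 1 - monomial e' 1) +
        monomial (d - e) 1 * mgen K n (t + 1) := by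
    rw [mgen_eq_monomial_pattern, ← mul_add, sub_add_cancel, monomial_mul, one_mul,
      tsub_add_cancel_of_le hle]
  rw [hdecomp, bei_eq_binomialIdeal]
  exact add_mem (Ideal.mem_sup_left (Ideal.mul_mem_left _ _
      (monomial_sub_monomial_mem_binomialIdeal (lineInvCon_le_addConGen hee') 1)))
    (Ideal.mem_sup_right (Ideal.mul_mem_left _ _
      (Ideal.subset_span ⟨t + 1, by omega, by omega, rfl⟩)))

theorem colon_bei_lineG_gElt (K : Type) [Field K] (hn : 2 ≤ n) :
    (bei K (lineG n)).colon (Ideal.span {gElt K (show 0 < n by omega)}) =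
      bei K (lineG n) ⊔ monoM K n := by
  refine le_antisymm (fun f hf => ?_) (sup_le (fun f hf => ?_) ?_)
  · rw [Ideal.mem_colon_span_singleton] at hf
    obtain ⟨f₁, f₂, rfl, h₁, h₂⟩ := exists_split_support (¬HasInteriorGap ·) f
    have hf₁ : f₁ ∈ (bei K (lineG n)).colon (Ideal.span {gElt K (show 0 < n by omega)}) :=
      mem_of_forall_monomial_mem fun d hd =>
        Ideal.mem_colon_span_singleton.2 (monomial_mul_gElt_mem_bei K hn (h₁ d hd))
    rw [Ideal.mem_colon_span_singleton] at hf₁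
    have hf₂ : f₂ ∈ bei K (lineG n) :=
      mem_bei_lineG_of_mul_gElt_mem K _ (by simpa [add_mul] using sub_mem hf hf₁)
        fun d hd => not_not.1 (h₂ d hd)
    exact add_mem (mem_of_forall_monomial_mem fun d hd =>
      monomial_mem_bei_sup_monoM K hn (h₁ d hd)) (Ideal.mem_sup_left hf₂)
  · exact Ideal.mem_colon_span_singleton.2 (Ideal.mul_mem_right _ _ hf)
  · rw [monoM, Ideal.span_le]
    rintro _ ⟨i, -, -, rfl⟩
    rw [SetLike.mem_coe, Ideal.mem_colon_span_singleton, mgen_eq_monomial_pattern]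
    exact monomial_mul_gElt_mem_bei K hn (not_hasInteriorGap_pattern _)

end CompleteMonomials

/-- Let `n ≥ 3`, let `L` be the line (path) on `[n]` with binomial
edge ideal `I_L`, let `g = x_1 y_n − x_n y_1`, let `J_G̃` be the binomial edge ideal
of the complete graph on `[n]`, and let `M` be the monomial ideal generated by the
`n−1` monomials `x_2 x_3 ⋯ x_i y_{i+1} ⋯ y_{n−1}` for `i = 1, …, n−1`.  Then
`I_L : g = (I_L, M)`, and consequently `(I_L : g) + J_G̃ = M + J_G̃`. -/
theorem statement16 (K : Type) [Field K] (n : ℕ) (hn : 3 ≤ n) :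
    (bei K (lineG n)).colon (Ideal.span {gElt K (show 0 < n by omega)}) =
      bei K (lineG n) ⊔ monoM K n ∧
    (bei K (lineG n)).colon (Ideal.span {gElt K (show 0 < n by omega)}) ⊔
        bei K (⊤ : SimpleGraph (Fin n)) =
      monoM K n ⊔ bei K (⊤ : SimpleGraph (Fin n)) := by
  have hcolon := colon_bei_lineG_gElt K (n := n) (by omega)
  refine ⟨hcolon, ?_⟩
  rw [hcolon, sup_assoc, sup_eq_right.2 (le_sup_of_le_right (bei_mono K le_top))]

end BEIPaper
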